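/- arXiv:2410.18664 — 6 statements merged into one kernel-verified Lean document; each statement's English description precedes it below -/
import Mathlib

section
/- Let S be a Polish space and let ν be a finite positive Borel measure on S. Then the order interval [0, ν] = {ν̂ a finite positive Borel measure on S : ν̂ ≤ ν (i.e., ν̂(A) ≤ ν(A) for all Borel sets A)} is compact in the topology of weak convergence of measures. -/
/-!
A measure `μ ≤ ν` is `f • ν` for a density `0 ≤ f ≤ 1`, so `μ ↦ (g ↦ ∫ f g ∂ν)` identifies
`[0, ν]` with the functionals on `L²(ν)` that are positive and dominated by `g ↦ ∫ g ∂ν`.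
These form a weak-* closed bounded set, compact by Banach–Alaoglu, and the way back to measures
is continuous because bounded continuous functions lie in `L²(ν)`.
-/

open MeasureTheory

open scoped ENNReal InnerProductSpace BoundedContinuousFunction

namespace MeasureTheory

lemma L2.real_inner_eq_integral_mul {S : Type*} [MeasurableSpace S] {μ : Measure S}
    (f g : Lp ℝ 2 μ) : ⟪f, g⟫_ℝ = ∫ x, f x * g x ∂μ := by
  simp only [L2.inner_def, RCLike.inner_apply, conj_trivial, mul_comm]

section DominatedFunctionals

variable {S : Type*} [MeasurableSpace S] (ν : Measure S)

def dominatedFunctionals : Set (WeakDual ℝ (Lp ℝ 2 ν)) :=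
  {φ | ∀ g : Lp ℝ 2 ν, 0 ≤ g → 0 ≤ φ g ∧ φ g ≤ ∫ x, g x ∂ν}

noncomputable def rieszDensity (φ : WeakDual ℝ (Lp ℝ 2 ν)) : Lp ℝ 2 ν :=
  (InnerProductSpace.toDual ℝ (Lp ℝ 2 ν)).symm (WeakDual.toStrongDual φ)

variable {ν}

lemma apply_eq_integral_rieszDensity_mul (φ : WeakDual ℝ (Lp ℝ 2 ν)) (g : Lp ℝ 2 ν) :
    φ g = ∫ x, rieszDensity ν φ x * g x ∂ν := by
  rw [← L2.real_inner_eq_integral_mul, rieszDensity, InnerProductSpace.toDual_symm_apply]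
  rfl

@[simp]
lemma rieszDensity_toWeakDual_toDual (f : Lp ℝ 2 ν) :
    rieszDensity ν (StrongDual.toWeakDual (InnerProductSpace.toDual ℝ _ f)) = f :=
  (InnerProductSpace.toDual ℝ _).symm_apply_apply f

lemma apply_indicatorConstLp_one (φ : WeakDual ℝ (Lp ℝ 2 ν)) {s : Set S}
    (hs : MeasurableSet s) (hνs : ν s ≠ ∞) :
    φ (indicatorConstLp 2 hs hνs (1 : ℝ)) = ∫ x in s, rieszDensity ν φ x ∂ν := by
  rw [← L2.inner_indicatorConstLp_one hs hνs, real_inner_comm, rieszDensity,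
    InnerProductSpace.toDual_symm_apply]
  rfl

lemma indicatorConstLp_one_nonneg {s : Set S} (hs : MeasurableSet s) (hνs : ν s ≠ ∞) :
    0 ≤ indicatorConstLp 2 hs hνs (1 : ℝ) := by
  rw [← Lp.coeFn_nonneg]
  filter_upwards [indicatorConstLp_coeFn (p := 2) (hs := hs) (hμs := hνs) (c := (1 : ℝ))]
    with x hx
  rw [hx]
  exact Set.indicator_nonneg (fun _ _ ↦ zero_le_one) x

variable (ν) in
lemma isClosed_dominatedFunctionals : IsClosed (dominatedFunctionals ν) := by
  simp only [dominatedFunctionals, Set.ofPred_forall]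
  exact isClosed_iInter fun g ↦ isClosed_iInter fun _ ↦
    ((isClosed_le continuous_const (WeakDual.eval_continuous g)).inter
      (isClosed_le (WeakDual.eval_continuous g) continuous_const))

variable [IsFiniteMeasure ν]

lemma ae_mem_Icc_rieszDensity {φ : WeakDual ℝ (Lp ℝ 2 ν)} (hφ : φ ∈ dominatedFunctionals ν) :
    ∀ᵐ x ∂ν, rieszDensity ν φ x ∈ Set.Icc 0 1 := by
  have hint : Integrable (rieszDensity ν φ) ν := (Lp.memLp _).integrable one_le_two
  have hnonneg : 0 ≤ᵐ[ν] rieszDensity ν φ :=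
    ae_nonneg_of_forall_setIntegral_nonneg hint fun s hs hνs ↦ by
      rw [← apply_indicatorConstLp_one φ hs hνs.ne]
      exact (hφ _ (indicatorConstLp_one_nonneg hs hνs.ne)).1
  have hle : rieszDensity ν φ ≤ᵐ[ν] fun _ ↦ 1 :=
    ae_le_of_forall_setIntegral_le hint (integrable_const 1) fun s hs hνs ↦ by
      rw [← apply_indicatorConstLp_one φ hs hνs.ne]
      simpa [integral_indicatorConstLp hs hνs.ne] using
        (hφ _ (indicatorConstLp_one_nonneg hs hνs.ne)).2
  filter_upwards [hnonneg, hle] with x h₀ h₁ using ⟨h₀, h₁⟩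

lemma mem_dominatedFunctionals_of_ae_mem_Icc {φ : WeakDual ℝ (Lp ℝ 2 ν)}
    (hφ : ∀ᵐ x ∂ν, rieszDensity ν φ x ∈ Set.Icc 0 1) : φ ∈ dominatedFunctionals ν := by
  intro g hg
  have hg' : 0 ≤ᵐ[ν] g := Lp.coeFn_nonneg g |>.mpr hg
  have hgint : Integrable g ν := (Lp.memLp g).integrable one_le_two
  rw [apply_eq_integral_rieszDensity_mul]
  refine ⟨integral_nonneg_of_ae ?_, integral_mono_ae ?_ hgint ?_⟩
  · filter_upwards [hφ, hg'] with x hx hgx using mul_nonneg hx.1 hgx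
  · refine hgint.bdd_mul (c := 1) (Lp.aestronglyMeasurable _) ?_
    filter_upwards [hφ] with x hx
    rw [Real.norm_eq_abs, abs_of_nonneg hx.1]
    exact hx.2
  · filter_upwards [hφ, hg'] with x hx hgx
    exact mul_le_of_le_one_left hgx hx.2

lemma norm_toStrongDual_le {φ : WeakDual ℝ (Lp ℝ 2 ν)} (hφ : φ ∈ dominatedFunctionals ν) :
    ‖WeakDual.toStrongDual φ‖ ≤ ‖Lp.const 2 ν (1 : ℝ)‖ := by
  rw [← (InnerProductSpace.toDual ℝ (Lp ℝ 2 ν)).symm.norm_map]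
  change ‖rieszDensity ν φ‖ ≤ _
  refine Lp.norm_le_norm_of_ae_le ?_
  filter_upwards [ae_mem_Icc_rieszDensity hφ, Lp.coeFn_const 2 ν (1 : ℝ)] with x hx h1
  rw [h1, Function.const_apply, norm_one, Real.norm_eq_abs, abs_of_nonneg hx.1]
  exact hx.2

variable (ν) in
lemma isCompact_dominatedFunctionals : IsCompact (dominatedFunctionals ν) :=
  (WeakDual.isCompact_closedBall 0 ‖Lp.const 2 ν (1 : ℝ)‖).of_isClosed_subset
    (isClosed_dominatedFunctionals ν) fun _ hφ ↦ by
      simpa using norm_toStrongDual_le hφ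

end DominatedFunctionals

section DensityMeasure

lemma withDensity_min_one_le {S : Type*} [MeasurableSpace S] (ν : Measure S) (f : S → ℝ≥0∞) :
    ν.withDensity (fun x ↦ min (f x) 1) ≤ ν :=
  calc ν.withDensity (fun x ↦ min (f x) 1) ≤ ν.withDensity 1 :=
        withDensity_mono (.of_forall fun _ ↦ min_le_right _ _)
    _ = ν := withDensity_one

variable {S : Type*} [MeasurableSpace S] {ν : Measure S} [IsFiniteMeasure ν]

/-- Truncating the density at `1` makes this a finite measure for every `φ`. -/
noncomputable def densityMeasure (ν : Measure S) [IsFiniteMeasure ν]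
    (φ : WeakDual ℝ (Lp ℝ 2 ν)) : FiniteMeasure S :=
  ⟨ν.withDensity fun x ↦ min (ENNReal.ofReal (rieszDensity ν φ x)) 1,
    isFiniteMeasure_of_le ν (withDensity_min_one_le ν _)⟩

lemma densityMeasure_le (φ : WeakDual ℝ (Lp ℝ 2 ν)) : (densityMeasure ν φ : Measure S) ≤ ν :=
  withDensity_min_one_le ν _

lemma densityMeasure_eq_withDensity {φ : WeakDual ℝ (Lp ℝ 2 ν)}
    (hφ : φ ∈ dominatedFunctionals ν) :
    (densityMeasure ν φ : Measure S) = ν.withDensity fun x ↦ ENNReal.ofReal (rieszDensity ν φ x) :=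
  withDensity_congr_ae <| by
    filter_upwards [ae_mem_Icc_rieszDensity hφ] with x hx
    exact min_eq_left (ENNReal.ofReal_le_one.mpr hx.2)

lemma integral_densityMeasure [TopologicalSpace S] [BorelSpace S]
    {φ : WeakDual ℝ (Lp ℝ 2 ν)} (hφ : φ ∈ dominatedFunctionals ν) (g : S →ᵇ ℝ) :
    ∫ x, g x ∂(densityMeasure ν φ : Measure S) = φ (g.toLp 2 ν ℝ) := by
  have hd := (Lp.aestronglyMeasurable (rieszDensity ν φ)).aemeasurable
  rw [densityMeasure_eq_withDensity hφ, integral_withDensity_eq_integral_toReal_smul₀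
    hd.ennreal_ofReal (.of_forall fun _ ↦ ENNReal.ofReal_lt_top),
    apply_eq_integral_rieszDensity_mul]
  refine integral_congr_ae ?_
  filter_upwards [ae_mem_Icc_rieszDensity hφ, g.coeFn_toLp 2 ν ℝ] with x hx hg
  rw [hg, ENNReal.toReal_ofReal hx.1, smul_eq_mul]

lemma continuousOn_densityMeasure [TopologicalSpace S] [BorelSpace S] :
    ContinuousOn (densityMeasure ν) (dominatedFunctionals ν) := by
  rw [continuousOn_iff_continuous_domRestrict,
    FiniteMeasure.continuous_iff_forall_continuous_integral]
  exact fun g ↦ ((WeakDual.eval_continuous (g.toLp 2 ν ℝ)).comp continuous_subtype_val).congr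
    fun φ ↦ (integral_densityMeasure φ.2 g).symm

lemma exists_densityMeasure_eq {μ : FiniteMeasure S} (hμ : (μ : Measure S) ≤ ν) :
    ∃ φ ∈ dominatedFunctionals ν, densityMeasure ν φ = μ := by
  have hle : ∀ᵐ x ∂ν, (μ : Measure S).rnDeriv ν x ≤ 1 := Measure.rnDeriv_le_one_of_le hμ
  have hf : MemLp (fun x ↦ ((μ : Measure S).rnDeriv ν x).toReal) 2 ν := by
    refine .of_bound (Measure.measurable_rnDeriv _ _).ennreal_toReal.aestronglyMeasurable 1 ?_
    filter_upwards [hle] with x hx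
    simpa using ENNReal.toReal_mono ENNReal.one_ne_top hx
  let φ := StrongDual.toWeakDual (InnerProductSpace.toDual ℝ _ (hf.toLp _))
  have hφ : rieszDensity ν φ =ᵐ[ν] fun x ↦ ((μ : Measure S).rnDeriv ν x).toReal := by
    simpa [φ] using hf.coeFn_toLp
  have hmem : φ ∈ dominatedFunctionals ν := mem_dominatedFunctionals_of_ae_mem_Icc <| by
    filter_upwards [hφ, hle] with x hx h1
    rw [hx]
    exact ⟨ENNReal.toReal_nonneg, by simpa using ENNReal.toReal_mono ENNReal.one_ne_top h1⟩
  refine ⟨φ, hmem, FiniteMeasure.toMeasure_injective ?_⟩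
  rw [densityMeasure_eq_withDensity hmem]
  conv_rhs => rw [← Measure.withDensity_rnDeriv_eq _ _ hμ.absolutelyContinuous]
  refine withDensity_congr_ae ?_
  filter_upwards [hφ, hle] with x hx h1
  rw [hx, ENNReal.ofReal_toReal (ne_top_of_le_ne_top ENNReal.one_ne_top h1)]

end DensityMeasure

end MeasureTheory

theorem stmt_0_general {S : Type*} [MetricSpace S]
    [MeasurableSpace S] [BorelSpace S]
    (ν : Measure S) [IsFiniteMeasure ν] :
    IsCompact {μ : FiniteMeasure S | (μ : Measure S) ≤ ν} := by
  have himage : {μ : FiniteMeasure S | (μ : Measure S) ≤ ν} =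
      densityMeasure ν '' dominatedFunctionals ν := by
    ext μ
    refine ⟨fun hμ ↦ exists_densityMeasure_eq hμ, ?_⟩
    rintro ⟨φ, -, rfl⟩
    exact densityMeasure_le φ
  rw [himage]
  exact (isCompact_dominatedFunctionals ν).image_of_continuousOn continuousOn_densityMeasure

/-- The order interval `[0, ν]` of finite positive Borel measures below a finite
positive Borel measure `ν` on a Polish space is compact in the topology of weak
convergence of measures. -/
theorem stmt_0 {S : Type*} [MetricSpace S] [PolishSpace S]
    [MeasurableSpace S] [BorelSpace S]
    (ν : Measure S) [IsFiniteMeasure ν] :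
    IsCompact {μ : FiniteMeasure S | (μ : Measure S) ≤ ν} :=
  stmt_0_general ν
end

section
/- Let ν be a Borel probability measure on [0,1], δ ≥ 0, and 0 < c ≤ 1 such that ν([0,c)) > δ. Then there exists c̄ in the support of ν with 0 ≤ c̄ < c, ν([c̄, c)) > 0, and ν([0, c̄]) > δ. -/
/-!
Let `m` be the supremum of the support points below `c`. No support lies in `(m, c)`, so that
interval is null. If `[m, c)` carries mass, then `c̄ = m` works. Otherwise `ν([0, m)) > δ`, so by
continuity from below some `y < m` already has `ν([0, y]) > δ`; as `m` is a limit of support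
points, `(y, m)` has positive mass, hence contains a support point `c̄`, and `(c̄, c)` has positive
mass because it contains support points approaching `m`.
-/

open MeasureTheory Set

/-- The topological support of a Borel measure: the set of points all of whose open
neighbourhoods have positive measure. -/
def msupport {X : Type*} [TopologicalSpace X] [MeasurableSpace X] (μ : Measure X) : Set X :=
  {x | ∀ U : Set X, IsOpen U → x ∈ U → 0 < μ U}

theorem msupport_eq_support {X : Type*} [TopologicalSpace X] [MeasurableSpace X]
    (μ : Measure X) : msupport μ = μ.support := by
  rw [Measure.support_eq_forall_isOpen]
  ext x
  exact ⟨fun h U hxU hU => h U hU hxU, fun h U hU hxU => h U hxU hU⟩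

theorem exists_lt_measure_Iic_of_lt_measure_Iio {X : Type*} [LinearOrder X]
    [TopologicalSpace X] [OrderTopology X] [DenselyOrdered X] [FirstCountableTopology X]
    [MeasurableSpace X] {μ : Measure X} {c : X} {r : ENNReal} (h : r < μ (Iio c)) :
    ∃ x < c, r < μ (Iic x) := by
  obtain ⟨y, hy⟩ : (Iio c).Nonempty := nonempty_of_measure_ne_zero (pos_of_gt h).ne'
  obtain ⟨u, hu_mono, hu_mem, hu_lim⟩ := exists_seq_strictMono_tendsto' hy
  have hunion : ⋃ n, Iic (u n) = Iio c := by
    ext z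
    simp only [mem_iUnion, mem_Iic, mem_Iio]
    exact ⟨fun ⟨n, hn⟩ => hn.trans_lt (hu_mem n).2,
      fun hz => (hu_lim.eventually (lt_mem_nhds hz)).exists.imp fun _ => le_of_lt⟩
  rw [← hunion, Monotone.measure_iUnion fun _ _ hmn => Iic_subset_Iic.2 (hu_mono.monotone hmn),
    lt_iSup_iff] at h
  obtain ⟨n, hn⟩ := h
  exact ⟨u n, (hu_mem n).2, hn⟩

theorem measure_union_eq_left_of_null {α : Type*} [MeasurableSpace α] {μ : Measure α}
    {s t : Set α} (ht : μ t = 0) : μ (s ∪ t) = μ s :=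
  measure_congr (union_ae_eq_left_of_ae_eq_empty (ae_eq_empty.2 ht))

section IsLUB

variable {X : Type*} [LinearOrder X] [TopologicalSpace X] [MeasurableSpace X]
  {μ : Measure X} {b c m : X}

theorem IsLUB.measure_Ioo_eq_zero [HereditarilyLindelofSpace X]
    (hm : IsLUB (Iio c ∩ μ.support) m) : μ (Ioo m c) = 0 :=
  measure_mono_null (fun _ hx hxμ => hx.1.not_ge (hm.1 ⟨hx.2, hxμ⟩))
    Measure.measure_compl_support

theorem IsLUB.measure_Ioo_pos [OrderTopology X] (hm : IsLUB (Iio c ∩ μ.support) m)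
    (hb : b < m) : 0 < μ (Ioo b c) := by
  obtain ⟨s, ⟨hsc, hsμ⟩, hbs, -⟩ := hm.exists_between hb
  exact (Measure.mem_support_iff_forall s).1 hsμ _ (Ioo_mem_nhds hbs hsc)

theorem IsLUB.exists_mem_support_of_measure_Ico_eq_zero [OrderTopology X] [DenselyOrdered X]
    [FirstCountableTopology X] [HereditarilyLindelofSpace X]
    (hm : IsLUB (Iio c ∩ μ.support) m) (hmc : m ≤ c) (hnull : μ (Ico m c) = 0)
    {r : ENNReal} (h : r < μ (Iio c)) :
    ∃ b ∈ μ.support, b < c ∧ 0 < μ (Ico b c) ∧ r < μ (Iic b) := by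
  have hIio : r < μ (Iio m) := by
    rwa [← Iio_union_Ico_eq_Iio hmc, measure_union_eq_left_of_null hnull] at h
  obtain ⟨y, hym, hy⟩ := exists_lt_measure_Iic_of_lt_measure_Iio hIio
  have hpos : 0 < μ (Ioo y m) := by
    have := hm.measure_Ioo_pos hym
    rwa [← Ioo_union_Ico_eq_Ioo hym hmc, measure_union_eq_left_of_null hnull] at this
  obtain ⟨b, ⟨hyb, hbm⟩, hbμ⟩ := Measure.nonempty_inter_support_of_pos hpos
  exact ⟨b, hbμ, hbm.trans_le hmc,
    (hm.measure_Ioo_pos hbm).trans_le (measure_mono Ioo_subset_Ico_self),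
    hy.trans_le (measure_mono (Iic_subset_Iic.2 hyb.le))⟩

end IsLUB

theorem exists_mem_support_lt_measure_Ico_pos {X : Type*} [ConditionallyCompleteLinearOrder X]
    [TopologicalSpace X] [OrderTopology X] [DenselyOrdered X] [FirstCountableTopology X]
    [HereditarilyLindelofSpace X] [MeasurableSpace X] {μ : Measure X} {c : X} {r : ENNReal}
    (h : r < μ (Iio c)) :
    ∃ b ∈ μ.support, b < c ∧ 0 < μ (Ico b c) ∧ r < μ (Iic b) := by
  have hne : (Iio c ∩ μ.support).Nonempty := Measure.nonempty_inter_support_of_pos (pos_of_gt h)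
  have hm : IsLUB (Iio c ∩ μ.support) (sSup (Iio c ∩ μ.support)) :=
    isLUB_csSup hne ⟨c, fun _ hx => hx.1.le⟩
  set m := sSup (Iio c ∩ μ.support)
  have hmc : m ≤ c := hm.2 fun _ hx => hx.1.le
  rcases eq_zero_or_pos (μ (Ico m c)) with hnull | hpos
  · exact hm.exists_mem_support_of_measure_Ico_eq_zero hmc hnull h
  have hmc' : m < c := nonempty_Ico.1 (nonempty_of_measure_ne_zero hpos.ne')
  have hmμ : m ∈ μ.support :=
    Measure.isClosed_support.closure_subset (closure_mono inter_subset_right (hm.mem_closure hne))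
  refine ⟨m, hmμ, hmc', hpos, h.trans_le ?_⟩
  rw [← Iic_union_Ioo_eq_Iio hmc', measure_union_eq_left_of_null hm.measure_Ioo_eq_zero]

theorem stmt_2_general (ν : Measure unitInterval)
    (δ : ℝ) (c : unitInterval)
    (h : ENNReal.ofReal δ < ν (Set.Iio c)) :
    ∃ cbar : unitInterval, cbar ∈ msupport ν ∧ cbar < c ∧
      0 < ν (Set.Ico cbar c) ∧ ENNReal.ofReal δ < ν (Set.Iic cbar) := by
  rw [msupport_eq_support]
  exact exists_mem_support_lt_measure_Ico_pos h

/-- If `ν` is a Borel probability measure on `[0,1]`, `δ ≥ 0` and `0 < c ≤ 1` with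
`ν([0,c)) > δ`, then there is `c̄ ∈ supp ν` with `c̄ < c`, `ν([c̄,c)) > 0` and
`ν([0,c̄]) > δ`. -/
theorem stmt_2 (ν : Measure unitInterval) [IsProbabilityMeasure ν]
    (δ : ℝ) (hδ : 0 ≤ δ) (c : unitInterval) (hc : 0 < c)
    (h : ENNReal.ofReal δ < ν (Set.Iio c)) :
    ∃ cbar : unitInterval, cbar ∈ msupport ν ∧ cbar < c ∧
      0 < ν (Set.Ico cbar c) ∧ ENNReal.ofReal δ < ν (Set.Iic cbar) :=
  stmt_2_general ν δ c h
end

section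
/- (Mass ordering principle) Let ν₁, ν₂ be mutually singular Borel probability measures on [0,1]. Then there exist a, b ∈ [0,1] with a < b such that ν₁([a,b]) > 0 and ν₂([a,b]) > 0, and moreover either ν₁([0,b)) < ν₂([0,a]) or ν₂([0,b)) < ν₁([0,a]). -/
/-!
Write `F ν x = ν (Iic x)`. Mutually singular probability measures differ, so (up to symmetry)
`F ν₁ c < F ν₂ c` for some `c`; pick `t` strictly between. The distribution function of a finite
measure crosses every band `(s, t)` it enters: some `x` has `ν (Iio x) < t` and `s < ν (Iic x)`,
namely the infimum `p` of the points where `F ν` exceeds `s` or, by right-continuity, a point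
just to the right of `p`. Crossing `(t, F ν₂ c)` for `ν₂` gives `a ≤ c`, crossing `(F ν₁ c, t)`
for `ν₁` gives `b > c`; then `ν₁ (Iio b) < t < ν₂ (Iic a)`, and both measures charge `Icc a b`.
-/

open MeasureTheory Set Filter
open scoped ENNReal

namespace MeasureTheory

section LinearOrder

variable {α : Type*} [LinearOrder α] [MeasurableSpace α] {ν : Measure α}

theorem measure_Icc_pos_of_measure_Iio_lt {a b : α} (h : ν (Iio a) < ν (Iic b)) :
    0 < ν (Icc a b) := by
  refine pos_iff_ne_zero.2 fun h0 => h.not_ge ?_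
  calc ν (Iic b) ≤ ν (Iio a ∪ Icc a b) := measure_mono Iic_subset_Iio_union_Icc
    _ ≤ ν (Iio a) + ν (Icc a b) := measure_union_le _ _
    _ = ν (Iio a) := by rw [h0, add_zero]

end LinearOrder

section ConditionallyCompleteLinearOrder

variable {α : Type*} [ConditionallyCompleteLinearOrder α] [TopologicalSpace α] [OrderTopology α]
  [DenselyOrdered α] [FirstCountableTopology α] [MeasurableSpace α] {ν : Measure α} {t : ℝ≥0∞}

theorem exists_lt_measure_Iic_of_lt_measure_Iio {b : α} (h : t < ν (Iio b)) :
    ∃ y < b, t < ν (Iic y) := by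
  obtain ⟨q, hq⟩ := nonempty_of_measure_ne_zero h.ne_bot
  obtain ⟨u, hu_mono, hu_mem, hu_lim⟩ := exists_seq_strictMono_tendsto' hq
  rw [← iUnion_Iic_eq_Iio_of_lt_of_tendsto (fun n => (hu_mem n).2) hu_lim,
    Monotone.measure_iUnion fun m n hmn => Iic_subset_Iic.2 (hu_mono.monotone hmn),
    lt_iSup_iff] at h
  obtain ⟨n, hn⟩ := h
  exact ⟨u n, (hu_mem n).2, hn⟩

theorem exists_gt_measure_Iio_lt [OpensMeasurableSpace α] [IsFiniteMeasure ν] {p q : α}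
    (hpq : p < q) (h : ν (Iic p) < t) : ∃ r, p < r ∧ ν (Iio r) < t := by
  obtain ⟨u, hu_anti, hu_mem, hu_lim⟩ := exists_seq_strictAnti_tendsto' hpq
  have hIic : ⋂ n, Iio (u n) = Iic p := by
    simp only [← compl_Ici, ← compl_iUnion,
      iUnion_Ici_eq_Ioi_of_lt_of_tendsto (fun n => (hu_mem n).1) hu_lim, compl_Ioi]
  rw [← hIic, Antitone.measure_iInter (fun m n hmn => Iio_subset_Iio (hu_anti.antitone hmn))
      (fun n => measurableSet_Iio.nullMeasurableSet) ⟨0, measure_ne_top ν _⟩,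
    iInf_lt_iff] at h
  obtain ⟨n, hn⟩ := h
  exact ⟨u n, (hu_mem n).1, hn⟩

end ConditionallyCompleteLinearOrder

section CompleteLinearOrder

variable {α : Type*} [CompleteLinearOrder α] [TopologicalSpace α] [OrderTopology α]
  [DenselyOrdered α] [FirstCountableTopology α] [MeasurableSpace α] [OpensMeasurableSpace α]

theorem exists_measure_Iio_lt_and_lt_measure_Iic {ν : Measure α} [IsFiniteMeasure ν]
    {s t : ℝ≥0∞} {w : α} (hst : s < t) (hw : s < ν (Iic w)) :
    ∃ x, ν (Iio x) < t ∧ s < ν (Iic x) := by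
  set S := {x | s < ν (Iic x)}
  set p := sInf S
  have hwS : w ∈ S := hw
  have hp_Iio : ν (Iio p) ≤ s := by
    refine not_lt.1 fun hlt => ?_
    obtain ⟨y, hyp, hy⟩ := exists_lt_measure_Iic_of_lt_measure_Iio hlt
    exact hyp.not_ge (sInf_le hy)
  by_cases hp : s < ν (Iic p)
  · exact ⟨p, hp_Iio.trans_lt hst, hp⟩
  have hpw : p < w := (show p ≤ w from sInf_le hwS).lt_of_ne fun hpw => hp (hpw ▸ hw)
  obtain ⟨r, hpr, hr⟩ := exists_gt_measure_Iio_lt hpw ((not_lt.1 hp).trans_lt hst)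
  obtain ⟨x, hx, hxr⟩ := sInf_lt_iff.1 hpr
  exact ⟨r, hr, hx.trans_le (measure_mono (Iic_subset_Iic.2 hxr.le))⟩

theorem exists_ordered_Icc_of_measure_Iic_lt (ν₁ ν₂ : Measure α) [IsProbabilityMeasure ν₁]
    [IsProbabilityMeasure ν₂] {c : α} (hc : ν₁ (Iic c) < ν₂ (Iic c)) :
    ∃ a b, a < b ∧ 0 < ν₁ (Icc a b) ∧ 0 < ν₂ (Icc a b) ∧ ν₁ (Iio b) < ν₂ (Iic a) := by
  obtain ⟨t, hc₁, hc₂⟩ := exists_between hc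
  obtain ⟨a, ha_Iio, ha_Iic⟩ := exists_measure_Iio_lt_and_lt_measure_Iic hc₂ hc₂
  have hc₁_top : ν₁ (Iic c) < ν₁ (Iic ⊤) := by
    rw [Iic_top, measure_univ]
    exact hc₁.trans (hc₂.trans_le prob_le_one)
  obtain ⟨b, hb_Iio, hb_Iic⟩ := exists_measure_Iio_lt_and_lt_measure_Iic hc₁ hc₁_top
  have hac : a ≤ c := not_lt.1 fun hca => ha_Iio.not_ge (measure_mono (Iic_subset_Iio.2 hca))
  have hcb : c < b := not_le.1 fun hbc => hb_Iic.not_ge (measure_mono (Iic_subset_Iic.2 hbc))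
  refine ⟨a, b, hac.trans_lt hcb, measure_Icc_pos_of_measure_Iio_lt ?_,
    measure_Icc_pos_of_measure_Iio_lt ?_, hb_Iio.trans ha_Iic⟩
  · exact (measure_mono (Iio_subset_Iic_self.trans (Iic_subset_Iic.2 hac))).trans_lt hb_Iic
  · exact ha_Iio.trans_le (measure_mono (Iic_subset_Iic.2 hcb.le))

end CompleteLinearOrder

end MeasureTheory

/-- **Mass ordering principle.** If `ν₁, ν₂` are mutually singular Borel probability
measures on `[0,1]`, then there are `a < b` in `[0,1]` with `ν₁([a,b]) > 0`,
`ν₂([a,b]) > 0`, and either `ν₁([0,b)) < ν₂([0,a])` or `ν₂([0,b)) < ν₁([0,a])`. -/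
theorem stmt_4 (ν₁ ν₂ : Measure unitInterval)
    [IsProbabilityMeasure ν₁] [IsProbabilityMeasure ν₂]
    (hsing : ν₁ ⟂ₘ ν₂) :
    ∃ a b : unitInterval, a < b ∧
      0 < ν₁ (Set.Icc a b) ∧ 0 < ν₂ (Set.Icc a b) ∧
      (ν₁ (Set.Iio b) < ν₂ (Set.Iic a) ∨ ν₂ (Set.Iio b) < ν₁ (Set.Iic a)) := by
  have hne : ν₁ ≠ ν₂ := fun h =>
    IsProbabilityMeasure.ne_zero ν₁ ((Measure.MutuallySingular.self_iff ν₁).1 (h ▸ hsing))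
  obtain ⟨c, hc⟩ : ∃ c, ν₁ (Iic c) ≠ ν₂ (Iic c) := by
    by_contra! h
    exact hne (Measure.ext_of_Iic ν₁ ν₂ h)
  rcases hc.lt_or_gt with hc | hc
  · obtain ⟨a, b, hab, h₁, h₂, hlt⟩ := exists_ordered_Icc_of_measure_Iic_lt ν₁ ν₂ hc
    exact ⟨a, b, hab, h₁, h₂, Or.inl hlt⟩
  · obtain ⟨a, b, hab, h₂, h₁, hlt⟩ := exists_ordered_Icc_of_measure_Iic_lt ν₂ ν₁ hc
    exact ⟨a, b, hab, h₁, h₂, Or.inr hlt⟩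
end

section
/- Let ν₁, ν₂ be two distinct Borel probability measures on [0,1], each concentrated on (0,1), and suppose some point z ∈ {0,1} lies in supp(ν₁) ∩ supp(ν₂). Then there exist sequences (z̃ₙ) and (ẑₙ) in [0,1] such that the open intervals Zₙ with endpoints z̃ₙ and ẑₙ are pairwise disjoint and satisfy ν₁(Zₙ) > 0 and ν₂(Zₙ) > 0 for every n ≥ 1. -/
/-!
Since `ν₁, ν₂` do not charge the endpoints and `z` lies in both supports, say `z = 0`, both
measures charge `(0, a)` for every `a > 0`. By continuity from below along `(b, a) ↑ (0, a)`
there is `0 < b < a` such that both measures charge `(b, a)`. Iterating from `a = 1` gives a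
strictly decreasing sequence whose consecutive gaps are the required intervals. The case
`z = 1` is the same argument for the reversed order on `[0,1]`.
-/

open MeasureTheory

open Set Filter Function OrderDual

lemma measure_singleton_eq_zero_of_measure_eq_one {X : Type*} [MeasurableSpace X]
    {ν : Measure X} [IsProbabilityMeasure ν] {s : Set X} (hs : MeasurableSet s)
    (h : ν s = 1) {x : X} (hx : x ∉ s) : ν {x} = 0 :=
  measure_mono_null (singleton_subset_iff.2 hx) ((prob_compl_eq_zero_iff hs).2 h)

lemma exists_strictAnti_seq_of_forall_exists_lt {X : Type*} [Preorder X] {z a₀ : X}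
    {P : X → X → Prop} (h : ∀ a, z < a → ∃ b, z < b ∧ b < a ∧ P b a) (ha₀ : z < a₀) :
    ∃ u : ℕ → X, StrictAnti u ∧ ∀ n, P (u (n + 1)) (u n) := by
  choose! f hzf hfa hP using h
  have hz : ∀ n, z < f^[n] a₀ := by
    intro n
    induction n with
    | zero => exact ha₀
    | succ n ih => rw [Function.iterate_succ_apply']; exact hzf _ ih
  refine ⟨fun n => f^[n] a₀, strictAnti_nat_of_succ_lt fun n => ?_, fun n => ?_⟩ <;>
    simp only [Function.iterate_succ_apply']
  exacts [hfa _ (hz n), hP _ (hz n)]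

section LinearOrder

variable {X : Type*} [LinearOrder X] [TopologicalSpace X] [OrderTopology X] [MeasurableSpace X]
  {ν ν₁ ν₂ : Measure X} {z a : X}

lemma pos_measure_Ioo_of_isBot_mem_msupport (hz : IsBot z) (hs : z ∈ msupport ν)
    (h0 : ν {z} = 0) (ha : z < a) : 0 < ν (Ioo z a) := by
  have hsub : Iio a ⊆ {z} ∪ Ioo z a := fun x hx => (hz x).eq_or_lt.imp Eq.symm (⟨·, hx⟩)
  calc 0 < ν (Iio a) := hs _ isOpen_Iio ha
    _ ≤ ν ({z} ∪ Ioo z a) := measure_mono hsub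
    _ ≤ ν (Ioo z a) := (measure_union_le _ _).trans_eq (by rw [h0, zero_add])

lemma exists_mem_Ioo_pos_measure_Ioo [DenselyOrdered X] [FirstCountableTopology X] (hza : z < a)
    (h₁ : 0 < ν₁ (Ioo z a)) (h₂ : 0 < ν₂ (Ioo z a)) :
    ∃ b ∈ Ioo z a, 0 < ν₁ (Ioo b a) ∧ 0 < ν₂ (Ioo b a) := by
  obtain ⟨u, hu_anti, hu_mem, hu_lim⟩ := exists_seq_strictAnti_tendsto' hza
  have hunion : ⋃ n, Ioo (u n) a = Ioo z a := by
    ext x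
    simp only [mem_iUnion]
    refine ⟨fun ⟨n, hx⟩ => ⟨(hu_mem n).1.trans hx.1, hx.2⟩, fun hx => ?_⟩
    obtain ⟨n, hn⟩ := (hu_lim.eventually_lt_const hx.1).exists
    exact ⟨n, hn, hx.2⟩
  have hmono : Monotone fun n => Ioo (u n) a :=
    fun m n hmn => Ioo_subset_Ioo_left (hu_anti.antitone hmn)
  have hev : ∀ ν : Measure X, 0 < ν (Ioo z a) → ∀ᶠ n in atTop, 0 < ν (Ioo (u n) a) :=
    fun ν hν => (tendsto_measure_iUnion_atTop hmono).eventually_const_lt (hunion ▸ hν)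
  obtain ⟨n, hn₁, hn₂⟩ := ((hev ν₁ h₁).and (hev ν₂ h₂)).exists
  exact ⟨u n, hu_mem n, hn₁, hn₂⟩

theorem exists_pairwise_disjoint_uIoo_pos_measure [DenselyOrdered X] [FirstCountableTopology X]
    (hz : IsBot z) (ha : z < a)
    (hs₁ : z ∈ msupport ν₁) (hs₂ : z ∈ msupport ν₂) (h0₁ : ν₁ {z} = 0) (h0₂ : ν₂ {z} = 0) :
    ∃ ztil zhat : ℕ → X, Pairwise (Disjoint on fun n => uIoo (ztil n) (zhat n)) ∧
      ∀ n, 0 < ν₁ (uIoo (ztil n) (zhat n)) ∧ 0 < ν₂ (uIoo (ztil n) (zhat n)) := by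
  have step : ∀ c, z < c → ∃ b, z < b ∧ b < c ∧ 0 < ν₁ (Ioo b c) ∧ 0 < ν₂ (Ioo b c) := by
    intro c hc
    obtain ⟨b, hb, h⟩ := exists_mem_Ioo_pos_measure_Ioo hc
      (pos_measure_Ioo_of_isBot_mem_msupport hz hs₁ h0₁ hc)
      (pos_measure_Ioo_of_isBot_mem_msupport hz hs₂ h0₂ hc)
    exact ⟨b, hb.1, hb.2, h⟩
  obtain ⟨u, hu, hpos⟩ := exists_strictAnti_seq_of_forall_exists_lt step ha
  have huIoo : ∀ n, uIoo (u (n + 1)) (u n) = Ioo (u (n + 1)) (u n) :=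
    fun n => uIoo_of_lt (hu n.lt_succ_self)
  refine ⟨fun n => u (n + 1), u, ?_, fun n => huIoo n ▸ hpos n⟩
  simpa only [huIoo, Order.succ_eq_add_one] using hu.antitone.pairwise_disjoint_on_Ioo_succ

end LinearOrder

theorem stmt_7_general (ν₁ ν₂ : Measure unitInterval)
    [IsProbabilityMeasure ν₁] [IsProbabilityMeasure ν₂]
    (hconc₁ : ν₁ (Set.Ioo (0 : unitInterval) 1) = 1)
    (hconc₂ : ν₂ (Set.Ioo (0 : unitInterval) 1) = 1)
    (z : unitInterval) (hz01 : z ∈ ({0, 1} : Set unitInterval))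
    (hz : z ∈ msupport ν₁ ∩ msupport ν₂) :
    ∃ ztil zhat : ℕ → unitInterval,
      Pairwise (Function.onFun Disjoint
        (fun n => Set.Ioo (min (ztil n) (zhat n)) (max (ztil n) (zhat n)))) ∧
      ∀ n : ℕ, 0 < ν₁ (Set.Ioo (min (ztil n) (zhat n)) (max (ztil n) (zhat n))) ∧
        0 < ν₂ (Set.Ioo (min (ztil n) (zhat n)) (max (ztil n) (zhat n))) := by
  obtain ⟨hs₁, hs₂⟩ := hz
  have h0₁ (x) (hx : x ∉ Ioo (0 : unitInterval) 1) : ν₁ {x} = 0 :=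
    measure_singleton_eq_zero_of_measure_eq_one measurableSet_Ioo hconc₁ hx
  have h0₂ (x) (hx : x ∉ Ioo (0 : unitInterval) 1) : ν₂ {x} = 0 :=
    measure_singleton_eq_zero_of_measure_eq_one measurableSet_Ioo hconc₂ hx
  rcases hz01 with rfl | rfl
  · exact exists_pairwise_disjoint_uIoo_pos_measure (fun x => x.2.1) zero_lt_one
      hs₁ hs₂ (h0₁ 0 (by simp)) (h0₂ 0 (by simp))
  · obtain ⟨ztil, zhat, hdisj, hpos⟩ := exists_pairwise_disjoint_uIoo_pos_measure
      (X := unitIntervalᵒᵈ) (ν₁ := ν₁) (ν₂ := ν₂) (z := toDual 1) (a := toDual 0)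
      (isBot_toDual_iff.2 fun x => x.2.2) (toDual_lt_toDual.2 zero_lt_one) hs₁ hs₂
      (h0₁ 1 (by simp)) (h0₂ 1 (by simp))
    have huIoo (a b : unitIntervalᵒᵈ) :
        Ioo (min (ofDual a) (ofDual b)) (max (ofDual a) (ofDual b)) = toDual ⁻¹' uIoo a b :=
      uIoo_ofDual a b
    refine ⟨fun n => ofDual (ztil n), fun n => ofDual (zhat n), ?_, fun n => ?_⟩
    · simp only [huIoo]
      exact fun m n hmn => (hdisj hmn).preimage toDual
    · simp only [huIoo]
      exact hpos n

/-- Let `ν₁ ≠ ν₂` be Borel probability measures on `[0,1]` concentrated on `(0,1)` such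
that some `z ∈ {0,1}` lies in `supp ν₁ ∩ supp ν₂`. Then there are sequences `(z̃ₙ)`,
`(ẑₙ)` such that the open intervals `Zₙ` with endpoints `z̃ₙ` and `ẑₙ` are pairwise
disjoint and `ν₁(Zₙ) > 0`, `ν₂(Zₙ) > 0` for all `n`. -/
theorem stmt_7 (ν₁ ν₂ : Measure unitInterval)
    [IsProbabilityMeasure ν₁] [IsProbabilityMeasure ν₂] (hne : ν₁ ≠ ν₂)
    (hconc₁ : ν₁ (Set.Ioo (0 : unitInterval) 1) = 1)
    (hconc₂ : ν₂ (Set.Ioo (0 : unitInterval) 1) = 1)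
    (z : unitInterval) (hz01 : z ∈ ({0, 1} : Set unitInterval))
    (hz : z ∈ msupport ν₁ ∩ msupport ν₂) :
    ∃ ztil zhat : ℕ → unitInterval,
      Pairwise (Function.onFun Disjoint
        (fun n => Set.Ioo (min (ztil n) (zhat n)) (max (ztil n) (zhat n)))) ∧
      ∀ n : ℕ, 0 < ν₁ (Set.Ioo (min (ztil n) (zhat n)) (max (ztil n) (zhat n))) ∧
        0 < ν₂ (Set.Ioo (min (ztil n) (zhat n)) (max (ztil n) (zhat n))) :=
  stmt_7_general ν₁ ν₂ hconc₁ hconc₂ z hz01 hz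
end

section
/- Let Γ be a set of continuous maps [0,1] → [0,1], and let I = {I₁, …, I_m} be a finite covering of [0,1] by closed intervals such that for every g ∈ Γ and every I ∈ I: (1) g is monotone on I; (2) there exists J ∈ I with g(I) ⊆ J. Then for every g₁, g₂, …, gₙ ∈ Γ, the total variation of the composition g₁∘g₂∘⋯∘gₙ on [0,1] is at most m². -/
/-!
Every composition `h` of maps from `Γ` is again monotone on each interval `Iᵢ` and maps it
into some `Iⱼ`. Cut `[0,1]` at the (at most `2m`) endpoints of the intervals: a closed piece
between consecutive cut points contains no endpoint in its interior, so it lies inside a single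
`Iᵢ`, where `h` is monotone with values in `[0,1]` and hence has variation at most `1`. There
are at most `2m - 1` pieces, and `2m - 1 ≤ m²`.
-/

open Set
open scoped Finset

/-- Composition `g₁ ∘ g₂ ∘ ⋯ ∘ gₙ` of a finite list of self-maps. -/
def compAll {X : Type*} (l : List (X → X)) : X → X :=
  l.foldr (· ∘ ·) id

section compAll

variable {X ι : Type*} {S : ι → Set X} {l : List (X → X)}

theorem exists_mapsTo_compAll (hmaps : ∀ g ∈ l, ∀ i, ∃ j, MapsTo g (S i) (S j)) (i : ι) :
    ∃ j, MapsTo (compAll l) (S i) (S j) := by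
  induction l with
  | nil => exact ⟨i, mapsTo_id _⟩
  | cons g l ih =>
    obtain ⟨j, hj⟩ := ih fun g' hg' => hmaps g' (List.mem_cons_of_mem g hg')
    obtain ⟨k, hk⟩ := hmaps g List.mem_cons_self j
    exact ⟨k, hk.comp hj⟩

theorem monotoneOn_or_antitoneOn_compAll [Preorder X]
    (hmaps : ∀ g ∈ l, ∀ i, ∃ j, MapsTo g (S i) (S j))
    (hmono : ∀ g ∈ l, ∀ i, MonotoneOn g (S i) ∨ AntitoneOn g (S i)) (i : ι) :
    MonotoneOn (compAll l) (S i) ∨ AntitoneOn (compAll l) (S i) := by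
  induction l with
  | nil => exact Or.inl fun _ _ _ _ h => h
  | cons g l ih =>
    have hmaps' := fun g' hg' => hmaps g' (List.mem_cons_of_mem g hg')
    obtain ⟨j, hj⟩ := exists_mapsTo_compAll hmaps' i
    rcases hmono g List.mem_cons_self j with hg | hg <;>
      rcases ih hmaps' (fun g' hg' => hmono g' (List.mem_cons_of_mem g hg')) with hf | hf
    · exact Or.inl (hg.comp hf hj)
    · exact Or.inr (hg.comp_AntitoneOn hf hj)
    · exact Or.inr (hg.comp_MonotoneOn hf hj)
    · exact Or.inl (hg.comp hf hj)

end compAll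

theorem eVariationOn_neg {α E : Type*} [LinearOrder α] [SeminormedAddCommGroup E] (f : α → E)
    (s : Set α) : eVariationOn (-f) s = eVariationOn f s := by
  simp only [eVariationOn, Pi.neg_apply, edist_neg_neg]

theorem eVariationOn_Icc_le_one {α : Type*} [LinearOrder α] {f : α → unitInterval} {x y : α}
    (hxy : x ≤ y) (hf : MonotoneOn f (Icc x y) ∨ AntitoneOn f (Icc x y)) :
    eVariationOn f (Icc x y) ≤ 1 := by
  let F : α → ℝ := fun t => f t
  have hx : x ∈ Icc x y := left_mem_Icc.2 hxy
  have hy : y ∈ Icc x y := right_mem_Icc.2 hxy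
  change eVariationOn F (Icc x y) ≤ 1
  rw [← inter_self (Icc x y), ← ENNReal.ofReal_one]
  rcases hf with hf | hf
  · rw [MonotoneOn.eVariationOn_eq (fun a ha b hb hab => hf ha hb hab) hx hy]
    exact ENNReal.ofReal_le_ofReal (by linarith [(f y).2.2, (f x).2.1])
  · have hF : MonotoneOn (-F) (Icc x y) := fun a ha b hb hab => neg_le_neg (hf ha hb hab)
    rw [← eVariationOn_neg, hF.eVariationOn_eq hx hy]
    exact ENNReal.ofReal_le_ofReal (by simp only [Pi.neg_apply]; linarith [(f x).2.2, (f y).2.1])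

theorem exists_Icc_subset_of_forall_notMem_Ioo {α ι : Type*} [LinearOrder α] [DenselyOrdered α]
    {a b : ι → α} (hcover : ∀ z, ∃ i, z ∈ Icc (a i) (b i)) {x y : α}
    (ha : ∀ i, a i ∉ Ioo x y) (hb : ∀ i, b i ∉ Ioo x y) (hxy : x ≤ y) :
    ∃ i, Icc x y ⊆ Icc (a i) (b i) := by
  rcases hxy.eq_or_lt with rfl | hlt
  · obtain ⟨i, hi⟩ := hcover x
    exact ⟨i, by rwa [Icc_self, singleton_subset_iff]⟩
  obtain ⟨μ, hxμ, hμy⟩ := exists_between hlt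
  obtain ⟨i, hai, hbi⟩ := hcover μ
  refine ⟨i, Icc_subset_Icc ?_ ?_⟩
  · by_contra! h
    exact ha i ⟨h, hai.trans_lt hμy⟩
  · by_contra! h
    exact hb i ⟨hxμ.trans_le hbi, h⟩

theorem eVariationOn_Icc_le_mul_card_add_one {α E : Type*} [LinearOrder α] [PseudoEMetricSpace E]
    (f : α → E) (P : Finset α) (C : ENNReal)
    (hC : ∀ x y, x ≤ y → (∀ c ∈ P, c ∉ Ioo x y) → eVariationOn f (Icc x y) ≤ C)
    {x y : α} (hxy : x ≤ y) :
    eVariationOn f (Icc x y) ≤ C * ((#{c ∈ P | c ∈ Ioo x y} + 1 : ℕ) : ENNReal) := by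
  induction hn : #{c ∈ P | c ∈ Ioo x y} using Nat.strong_induction_on generalizing x y with
  | _ n ih =>
  by_cases hP : ∀ c ∈ P, c ∉ Ioo x y
  · exact (hC x y hxy hP).trans (le_mul_of_one_le_right' (by simp))
  obtain ⟨c, hcP, hxc, hcy⟩ : ∃ c ∈ P, c ∈ Ioo x y := by simpa using hP
  have hsplit : {d ∈ P | d ∈ Ioo x c} ∪ {d ∈ P | d ∈ Ioo c y} ⊆
      {d ∈ P | d ∈ Ioo x y}.erase c := by
    intro d
    simp only [Finset.mem_union, Finset.mem_filter, Finset.mem_erase, mem_Ioo]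
    grind
  have hcard := (Finset.card_union_of_disjoint (Finset.disjoint_filter.2 fun d _ hl hr =>
      (hl.2.trans hr.1).false)).symm.trans_le (Finset.card_le_card hsplit)
  have hc : c ∈ {d ∈ P | d ∈ Ioo x y} := Finset.mem_filter.2 ⟨hcP, hxc, hcy⟩
  have := Finset.card_erase_add_one hc
  rw [← univ_inter (Icc x y), ← eVariationOn.Icc_add_Icc f hxc.le hcy.le (mem_univ c),
    univ_inter, univ_inter]
  calc _ ≤ C * ((#{d ∈ P | d ∈ Ioo x c} + 1 : ℕ) : ENNReal)
        + C * ((#{d ∈ P | d ∈ Ioo c y} + 1 : ℕ) : ENNReal) :=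
        add_le_add (ih _ (by omega) hxc.le rfl) (ih _ (by omega) hcy.le rfl)
    _ ≤ C * ((n + 1 : ℕ) : ENNReal) := by
      rw [← mul_add, ← Nat.cast_add]
      exact mul_le_mul_right (Nat.cast_le.2 (by omega)) C

theorem card_filter_mem_Ioo_add_two_le {α : Type*} [LinearOrder α] {P : Finset α} {a b : α}
    (ha : a ∈ P) (hb : b ∈ P) (hab : a < b) : #{c ∈ P | c ∈ Ioo a b} + 2 ≤ #P := by
  have hsub : {c ∈ P | c ∈ Ioo a b} ⊆ (P.erase b).erase a := by
    intro c
    simp only [Finset.mem_filter, Finset.mem_erase, mem_Ioo]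
    grind
  have := Finset.card_le_card hsub
  rw [Finset.card_erase_of_mem (Finset.mem_erase.2 ⟨hab.ne, ha⟩),
    Finset.card_erase_of_mem hb] at this
  have := Finset.card_le_card (Finset.insert_subset ha (Finset.singleton_subset_iff.2 hb))
  rw [Finset.card_pair hab.ne] at this
  omega

theorem stmt_9_general (Γ : Set (unitInterval → unitInterval))
    (m : ℕ) (I : Fin m → unitInterval × unitInterval)
    (hcover : ∀ x : unitInterval, ∃ i : Fin m, x ∈ Set.Icc (I i).1 (I i).2)
    (hmono : ∀ g ∈ Γ, ∀ i : Fin m,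
      MonotoneOn g (Set.Icc (I i).1 (I i).2) ∨ AntitoneOn g (Set.Icc (I i).1 (I i).2))
    (hmaps : ∀ g ∈ Γ, ∀ i : Fin m, ∃ j : Fin m,
      g '' Set.Icc (I i).1 (I i).2 ⊆ Set.Icc (I j).1 (I j).2) :
    ∀ l : List (unitInterval → unitInterval), l ≠ [] → (∀ g ∈ l, g ∈ Γ) →
      eVariationOn (compAll l) Set.univ ≤ (m : ENNReal) ^ 2 := by
  intro l _ hl
  let P : Finset unitInterval :=
    Finset.univ.image (fun i => (I i).1) ∪ Finset.univ.image (fun i => (I i).2)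
  have hpiece : ∀ x y, x ≤ y → (∀ c ∈ P, c ∉ Ioo x y) →
      eVariationOn (compAll l) (Icc x y) ≤ 1 := by
    intro x y hxy hP
    obtain ⟨i, hi⟩ := exists_Icc_subset_of_forall_notMem_Ioo hcover
      (fun i => hP _ (by simp [P])) (fun i => hP _ (by simp [P])) hxy
    refine eVariationOn_Icc_le_one hxy ((monotoneOn_or_antitoneOn_compAll
      (fun g hg i => (hmaps g (hl g hg) i).imp fun _ => mapsTo_iff_image_subset.2)
      (fun g hg => hmono g (hl g hg)) i).imp (·.mono hi) (·.mono hi))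
  obtain ⟨i₀, hi₀⟩ := hcover 0
  obtain ⟨i₁, hi₁⟩ := hcover 1
  have h0 : (0 : unitInterval) ∈ P := by simpa [P] using Or.inl ⟨i₀, le_antisymm hi₀.1 bot_le⟩
  have h1 : (1 : unitInterval) ∈ P := by simpa [P] using Or.inr ⟨i₁, le_antisymm le_top hi₁.2⟩
  have hP : #P ≤ 2 * m := calc
    #P ≤ #(Finset.univ : Finset (Fin m)) + #(Finset.univ : Finset (Fin m)) :=
      (Finset.card_union_le _ _).trans (add_le_add Finset.card_image_le Finset.card_image_le)
    _ = 2 * m := by simp [two_mul]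
  have hcut := card_filter_mem_Ioo_add_two_le h0 h1 zero_lt_one
  rw [unitInterval.univ_eq_Icc]
  refine (eVariationOn_Icc_le_mul_card_add_one _ P 1 hpiece zero_le_one).trans ?_
  rw [one_mul]
  exact_mod_cast (show _ ≤ m ^ 2 by nlinarith [two_mul_le_add_sq m 1])

/-- Let `Γ` be a set of continuous self-maps of `[0,1]` and `I₁, …, I_m` a finite
covering of `[0,1]` by closed intervals such that every `g ∈ Γ` is monotone on each `Iᵢ`
and maps each `Iᵢ` into some `Iⱼ`. Then the total variation of any composition
`g₁ ∘ ⋯ ∘ gₙ` of maps from `Γ` on `[0,1]` is at most `m²`. -/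
theorem stmt_9 (Γ : Set (unitInterval → unitInterval))
    (hΓcont : ∀ g ∈ Γ, Continuous g)
    (m : ℕ) (I : Fin m → unitInterval × unitInterval)
    (hcover : ∀ x : unitInterval, ∃ i : Fin m, x ∈ Set.Icc (I i).1 (I i).2)
    (hmono : ∀ g ∈ Γ, ∀ i : Fin m,
      MonotoneOn g (Set.Icc (I i).1 (I i).2) ∨ AntitoneOn g (Set.Icc (I i).1 (I i).2))
    (hmaps : ∀ g ∈ Γ, ∀ i : Fin m, ∃ j : Fin m,
      g '' Set.Icc (I i).1 (I i).2 ⊆ Set.Icc (I j).1 (I j).2) :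
    ∀ l : List (unitInterval → unitInterval), l ≠ [] → (∀ g ∈ l, g ∈ Γ) →
      eVariationOn (compAll l) Set.univ ≤ (m : ENNReal) ^ 2 :=
  stmt_9_general Γ m I hcover hmono hmaps
end

section
/- Let f₁, f₂: [0,1] → [0,1] be continuous functions such that f₂ is nonexpansive (Lipschitz with constant ≤ 1) and such that for every m ∈ ℕ, the composition f₂∘f₁^m is Lipschitz with constant ≤ 1. Then for every finite sequence i₁, …, i_{n−1} ∈ {1,2}, the total variation of f₂∘f_{i₁}∘⋯∘f_{i_{n−1}} on [0,1] is at most 1. -/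
open MeasureTheory

/-! Every word `f₂ ∘ f_{i₁} ∘ ⋯ ∘ f_{iₖ}` splits at its occurrences of `f₂` into blocks
`f₂ ∘ f₁^[m]`, each of which is `1`-Lipschitz by hypothesis; a `1`-Lipschitz function on
`[a, b]` has variation at most `b - a`. -/

open Set

lemma lipschitzWith_comp_iterate_comp_compAll {X : Type*} [PseudoEMetricSpace X]
    {f₁ f₂ : X → X} (hcomp : ∀ m : ℕ, LipschitzWith 1 (f₂ ∘ f₁^[m]))
    {l : List (X → X)} (hl : ∀ g ∈ l, g = f₁ ∨ g = f₂) (m : ℕ) :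
    LipschitzWith 1 (f₂ ∘ f₁^[m] ∘ compAll l) := by
  induction l generalizing m with
  | nil => exact hcomp m
  | cons g t ih =>
    have ht : ∀ g ∈ t, g = f₁ ∨ g = f₂ := fun g hg => hl g (List.mem_cons_of_mem _ hg)
    rcases hl g List.mem_cons_self with rfl | rfl
    · have hshift : f₂ ∘ g^[m] ∘ compAll (g :: t) = f₂ ∘ g^[m + 1] ∘ compAll t := by
        rw [Function.iterate_succ]; rfl
      exact hshift ▸ ih ht (m + 1)
    · have h := (hcomp m).comp (ih ht 0)
      rw [mul_one] at h
      exact h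

lemma eVariationOn_id_Icc_subtype {a b : ℝ} (hab : a ≤ b) :
    eVariationOn (id : Icc a b → Icc a b) univ = .ofReal (b - a) := by
  have hval : eVariationOn (id : Icc a b → Icc a b) univ
      = eVariationOn (Subtype.val : Icc a b → ℝ) univ := by
    simp only [eVariationOn, id, Subtype.edist_eq]
  have hmono : MonotoneOn (Subtype.val : Icc a b → ℝ) univ := fun _ _ _ _ h => h
  have hIcc : Icc (⟨a, le_rfl, hab⟩ : Icc a b) ⟨b, hab, le_rfl⟩ = univ :=
    eq_univ_of_forall fun x => ⟨x.2.1, x.2.2⟩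
  simpa [hval, hIcc] using hmono.eVariationOn_eq (mem_univ (⟨a, le_rfl, hab⟩ : Icc a b))
    (mem_univ (⟨b, hab, le_rfl⟩ : Icc a b))

lemma LipschitzWith.eVariationOn_Icc_subtype_le {E : Type*} [PseudoEMetricSpace E]
    {a b : ℝ} (hab : a ≤ b) {K : NNReal} {f : Icc a b → E} (hf : LipschitzWith K f) :
    eVariationOn f univ ≤ K * .ofReal (b - a) := by
  simpa [eVariationOn_id_Icc_subtype hab] using
    (hf.lipschitzOnWith (s := univ)).comp_eVariationOn_le (g := id) (mapsTo_univ _ univ)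

theorem stmt_12_general (f₁ f₂ : unitInterval → unitInterval)
    (hcomp : ∀ m : ℕ, LipschitzWith 1 (f₂ ∘ f₁^[m])) :
    ∀ l : List (unitInterval → unitInterval), (∀ g ∈ l, g = f₁ ∨ g = f₂) →
      eVariationOn (f₂ ∘ compAll l) Set.univ ≤ 1 := by
  intro l hl
  simpa using (lipschitzWith_comp_iterate_comp_compAll hcomp hl 0).eVariationOn_Icc_subtype_le
    zero_le_one

/-- Let `f₁, f₂ : [0,1] → [0,1]` be continuous, `f₂` nonexpansive and `f₂ ∘ f₁^m`
Lipschitz with constant `≤ 1` for every `m`. Then any composition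
`f₂ ∘ f_{i₁} ∘ ⋯ ∘ f_{i_{n-1}}` with `iⱼ ∈ {1,2}` has total variation at most `1`
on `[0,1]`. -/
theorem stmt_12 (f₁ f₂ : unitInterval → unitInterval)
    (hf₁ : Continuous f₁) (hf₂ : Continuous f₂)
    (hne : LipschitzWith 1 f₂)
    (hcomp : ∀ m : ℕ, LipschitzWith 1 (f₂ ∘ f₁^[m])) :
    ∀ l : List (unitInterval → unitInterval), (∀ g ∈ l, g = f₁ ∨ g = f₂) →
      eVariationOn (f₂ ∘ compAll l) Set.univ ≤ 1 :=
  stmt_12_general f₁ f₂ hcomp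
end
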